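/- arXiv:2509.18595 — 3 statements merged into one kernel-verified Lean document; each statement's English description precedes it below -/
import Mathlib

section
/- If a, b ∈ ℝ³ are orthogonal unit vectors, then there exist indices i, j with |a_i b_j + b_i a_j|/2 ≥ 1/(3√2). Consequently, the symmetric matrix a ⊙ b := (a ⊗ b + b ⊗ a)/2 has entry-wise maximum norm at least 1/(3√2) and at most 1. -/
/-!
The nine entries `x_ij = a_i b_j + b_i a_j` satisfy
`∑ x_ij² = 2 (‖a‖²‖b‖² + ⟪a, b⟫²) = 2`. By pigeonhole some `x_ij² ≥ 2/9`, i.e.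
`|x_ij| / 2 ≥ √2 / 6 = 1 / (3√2)`; and every `x_ij² ≤ 2`, so `|x_ij| / 2 ≤ 1`.
-/

open Finset

section

variable {ι κ : Type*} [Fintype ι] [Fintype κ]

theorem sum_sum_sq_mul_add_mul (a b : EuclideanSpace ℝ ι) :
    ∑ i, ∑ j, (a i * b j + b i * a j) ^ 2 =
      2 * (‖a‖ ^ 2 * ‖b‖ ^ 2 + inner ℝ a b ^ 2) := by
  have hexp : ∀ i j, (a i * b j + b i * a j) ^ 2
      = a i ^ 2 * b j ^ 2 + b i ^ 2 * a j ^ 2 + 2 * (a i * b i) * (a j * b j) :=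
    fun i j => by ring
  simp only [hexp, sum_add_distrib, ← mul_sum, ← sum_mul, EuclideanSpace.real_norm_sq_eq,
    PiLp.inner_apply, RCLike.inner_apply, conj_trivial]
  simp only [mul_comm (b _) (a _)]
  ring

theorem exists_sum_sum_div_card_le [Nonempty ι] [Nonempty κ] (f : ι → κ → ℝ) :
    ∃ i j, (∑ i, ∑ j, f i j) / (Fintype.card ι * Fintype.card κ) ≤ f i j := by
  obtain ⟨⟨i, j⟩, -, h⟩ := exists_le_of_sum_le (s := univ) (f := fun _ : ι × κ =>
      (∑ i, ∑ j, f i j) / (Fintype.card ι * Fintype.card κ)) (g := fun p => f p.1 p.2)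
    univ_nonempty (by
      rw [sum_const, card_univ, Fintype.card_prod, nsmul_eq_mul, ← Fintype.sum_prod_type']
      push_cast
      field_simp
      rfl)
  exact ⟨i, j, h⟩

theorem le_sum_sum_of_nonneg {f : ι → κ → ℝ} (hf : ∀ i j, 0 ≤ f i j) (i : ι) (j : κ) :
    f i j ≤ ∑ i, ∑ j, f i j :=
  (single_le_sum (fun j _ => hf i j) (mem_univ j)).trans
    (single_le_sum (f := fun i => ∑ j, f i j) (fun i _ => sum_nonneg fun j _ => hf i j)
      (mem_univ i))

end

theorem one_div_three_mul_sqrt_two_le_abs_div_two {x : ℝ} (hx : 2 / 9 ≤ x ^ 2) :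
    1 / (3 * Real.sqrt 2) ≤ |x| / 2 := by
  have hsqrt : Real.sqrt 2 * Real.sqrt 2 = 2 := Real.mul_self_sqrt (by norm_num)
  have hpos : 0 < Real.sqrt 2 := by positivity
  rw [div_le_div_iff₀ (by positivity) (by norm_num)]
  nlinarith [sq_abs x, abs_nonneg x]

theorem stmt5 (a b : EuclideanSpace ℝ (Fin 3))
    (ha : ‖a‖ = 1) (hb : ‖b‖ = 1) (hab : (inner ℝ a b : ℝ) = 0) :
    (∃ i j : Fin 3, 1 / (3 * Real.sqrt 2) ≤ |a i * b j + b i * a j| / 2)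
    ∧ 1 / (3 * Real.sqrt 2) ≤
        (⨆ i : Fin 3, ⨆ j : Fin 3, |(a i * b j + b i * a j) / 2|)
    ∧ (⨆ i : Fin 3, ⨆ j : Fin 3, |(a i * b j + b i * a j) / 2|) ≤ 1 := by
  have hsum : ∑ i, ∑ j, (a i * b j + b i * a j) ^ 2 = 2 := by
    rw [sum_sum_sq_mul_add_mul, ha, hb, hab]; norm_num
  obtain ⟨i, j, hij⟩ := exists_sum_sum_div_card_le fun i j => (a i * b j + b i * a j) ^ 2
  norm_num [hsum] at hij
  have hlow := one_div_three_mul_sqrt_two_le_abs_div_two hij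
  refine ⟨⟨i, j, hlow⟩, ?_, ciSup_le fun i => ciSup_le fun j => ?_⟩
  · refine le_ciSup_of_le (Finite.bddAbove_range _) i
      (le_ciSup_of_le (Finite.bddAbove_range _) j ?_)
    rwa [abs_div, abs_two]
  · have hle := hsum ▸ le_sum_sum_of_nonneg (fun i j => sq_nonneg (a i * b j + b i * a j)) i j
    rw [abs_div, abs_two, div_le_one two_pos, abs_le]
    constructor <;> nlinarith
end

section
/- For two non-parallel directions θ₁, θ₂ ∈ ℝ³ with 5θ₁, 5θ₂ ∈ ℤ³, and base points x₁, x₂ ∈ ℝ³, the distance on the torus (ℝ/2πℤ)³ between the periodic lines L₁ = x₁ + ℝθ₁ and L₂ = x₂ + ℝθ₂ equals min over m ∈ ℤ³ of |(x₁ − x₂ + 2πm) · n|, where n = (θ₁ × θ₂)/|θ₁ × θ₂|. -/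
open Real

/-- Euclidean norm on `Fin 3 → ℝ`. -/
noncomputable def enorm3 (v : Fin 3 → ℝ) : ℝ := Real.sqrt (∑ i, v i ^ 2)

/-- Distance on the torus `(ℝ/2πℤ)³` between (representatives of) two points. -/
noncomputable def torusDist (a b : Fin 3 → ℝ) : ℝ :=
  ⨅ m : Fin 3 → ℤ, enorm3 (fun i => a i - b i + 2 * π * (m i : ℝ))

private lemma enorm3_nonneg (v : Fin 3 → ℝ) : 0 ≤ enorm3 v := Real.sqrt_nonneg _

private lemma bdd_range {ι : Sort*} (f : ι → ℝ) (h : ∀ i, 0 ≤ f i) :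
    BddBelow (Set.range f) := by
  refine ⟨0, ?_⟩; rintro x ⟨i, rfl⟩; exact h i

private lemma enorm3_pos {v : Fin 3 → ℝ} (h : v ≠ 0) : 0 < enorm3 v := by
  rw [enorm3, Real.sqrt_pos]
  obtain ⟨i, hi⟩ := Function.ne_iff.mp h
  exact Finset.sum_pos' (fun j _ => sq_nonneg _)
    ⟨i, Finset.mem_univ i, lt_of_le_of_ne (sq_nonneg _) (Ne.symm (pow_ne_zero 2 hi))⟩

private lemma cs3 (w c : Fin 3 → ℝ) : |∑ i, w i * c i| ≤ enorm3 w * enorm3 c := by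
  have h : (∑ i, w i * c i) ^ 2 ≤ (∑ i, w i ^ 2) * (∑ i, c i ^ 2) := by
    simp only [Fin.sum_univ_three]
    nlinarith [sq_nonneg (w 0 * c 1 - w 1 * c 0), sq_nonneg (w 0 * c 2 - w 2 * c 0),
      sq_nonneg (w 1 * c 2 - w 2 * c 1)]
  calc |∑ i, w i * c i| = Real.sqrt ((∑ i, w i * c i) ^ 2) := (Real.sqrt_sq_eq_abs _).symm
    _ ≤ Real.sqrt ((∑ i, w i ^ 2) * (∑ i, c i ^ 2)) := Real.sqrt_le_sqrt h
    _ = enorm3 w * enorm3 c := by rw [enorm3, enorm3, Real.sqrt_mul (by positivity)]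

private lemma rhs_eq (N : ℝ) (hN : 0 < N) (v c : Fin 3 → ℝ) :
    |∑ i, v i * (N⁻¹ * c i)| = N⁻¹ * |∑ i, v i * c i| := by
  have h : (∑ i, v i * (N⁻¹ * c i)) = N⁻¹ * ∑ i, v i * c i := by
    rw [Finset.mul_sum]; exact Finset.sum_congr rfl fun i _ => by ring
  rw [h, abs_mul, abs_of_pos (inv_pos.mpr hN)]

private lemma ident3 (θ₁ θ₂ v : Fin 3 → ℝ) (i : Fin 3) :
    (∑ j, (crossProduct θ₁ θ₂) j ^ 2) * v i
      - (∑ j, v j * (crossProduct θ₂ (crossProduct θ₁ θ₂)) j) * θ₁ i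
      - (∑ j, v j * (crossProduct (crossProduct θ₁ θ₂) θ₁) j) * θ₂ i
      = (∑ j, v j * (crossProduct θ₁ θ₂) j) * (crossProduct θ₁ θ₂) i := by
  fin_cases i <;> simp [cross_apply, Fin.sum_univ_three] <;> ring

private lemma orth3 (θ₁ θ₂ v : Fin 3 → ℝ) (t s : ℝ) :
    (∑ i, (v i + t * θ₁ i - s * θ₂ i) * (crossProduct θ₁ θ₂) i)
      = ∑ i, v i * (crossProduct θ₁ θ₂) i := by
  simp [cross_apply, Fin.sum_univ_three]; ring

private lemma enorm3_smul (k : ℝ) (c : Fin 3 → ℝ) :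
    enorm3 (fun i => k * c i) = |k| * enorm3 c := by
  rw [enorm3, enorm3]
  have h : (∑ i, (k * c i) ^ 2) = k ^ 2 * ∑ i, c i ^ 2 := by
    rw [Finset.mul_sum]; exact Finset.sum_congr rfl fun i _ => by ring
  rw [h, Real.sqrt_mul (sq_nonneg k), Real.sqrt_sq_eq_abs]

private lemma aux_lb (θ₁ θ₂ : Fin 3 → ℝ) (h : crossProduct θ₁ θ₂ ≠ 0)
    (v : Fin 3 → ℝ) (t s : ℝ) :
    |∑ i, v i * ((enorm3 (crossProduct θ₁ θ₂))⁻¹ * crossProduct θ₁ θ₂ i)|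
      ≤ enorm3 (fun i => v i + t * θ₁ i - s * θ₂ i) := by
  set c := crossProduct θ₁ θ₂ with hc
  have hN : 0 < enorm3 c := enorm3_pos h
  rw [rhs_eq _ hN]
  have h1 : (∑ i, v i * c i) = ∑ i, (v i + t * θ₁ i - s * θ₂ i) * c i :=
    (orth3 θ₁ θ₂ v t s).symm
  rw [h1]
  have h2 := cs3 (fun i => v i + t * θ₁ i - s * θ₂ i) c
  calc (enorm3 c)⁻¹ * |∑ i, (v i + t * θ₁ i - s * θ₂ i) * c i|
      ≤ (enorm3 c)⁻¹ * (enorm3 (fun i => v i + t * θ₁ i - s * θ₂ i) * enorm3 c) := by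
        exact mul_le_mul_of_nonneg_left h2 (by positivity)
    _ = enorm3 (fun i => v i + t * θ₁ i - s * θ₂ i) := by field_simp

private lemma aux_min (θ₁ θ₂ : Fin 3 → ℝ) (h : crossProduct θ₁ θ₂ ≠ 0)
    (v : Fin 3 → ℝ) :
    ∃ t s : ℝ, enorm3 (fun i => v i + t * θ₁ i - s * θ₂ i)
      = |∑ i, v i * ((enorm3 (crossProduct θ₁ θ₂))⁻¹ * crossProduct θ₁ θ₂ i)| := by
  set c := crossProduct θ₁ θ₂ with hc
  have hN : 0 < enorm3 c := enorm3_pos h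
  have hN2 : (enorm3 c) ^ 2 = ∑ j, c j ^ 2 := Real.sq_sqrt (by positivity)
  set N := enorm3 c with hNdef
  set A := ∑ j, v j * (crossProduct θ₂ c) j with hA
  set B := ∑ j, v j * (crossProduct c θ₁) j with hB
  set D := ∑ j, v j * c j with hD
  refine ⟨-(A / N ^ 2), B / N ^ 2, ?_⟩
  have hfun : (fun i => v i + -(A / N ^ 2) * θ₁ i - B / N ^ 2 * θ₂ i)
      = fun i => (D / N ^ 2) * c i := by
    funext i
    have hi := ident3 θ₁ θ₂ v i
    rw [← hc, ← hA, ← hB, ← hD, ← hN2] at hi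
    have hNne : N ^ 2 ≠ 0 := by positivity
    field_simp
    linarith [hi]
  rw [hfun, enorm3_smul, rhs_eq N hN]
  rw [abs_div, abs_of_pos (by positivity : (0:ℝ) < N ^ 2)]
  rw [← hD, ← hNdef]
  field_simp

/-- The torus distance between the periodic lines `x₁ + ℝθ₁` and `x₂ + ℝθ₂`
equals `min_{m ∈ ℤ³} |(x₁ − x₂ + 2πm) · n|` with `n = θ₁ × θ₂ / |θ₁ × θ₂|`. -/
theorem stmt13 (θ₁ θ₂ x₁ x₂ : Fin 3 → ℝ)
    (hint₁ : ∀ i, ∃ z : ℤ, 5 * θ₁ i = (z : ℝ))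
    (hint₂ : ∀ i, ∃ z : ℤ, 5 * θ₂ i = (z : ℝ))
    (hcross : crossProduct θ₁ θ₂ ≠ 0) :
    (⨅ p : ℝ × ℝ, torusDist (x₁ + p.1 • θ₁) (x₂ + p.2 • θ₂))
      = ⨅ m : Fin 3 → ℤ,
          |∑ i, (x₁ i - x₂ i + 2 * π * (m i : ℝ)) *
            ((enorm3 (crossProduct θ₁ θ₂))⁻¹ * crossProduct θ₁ θ₂ i)| := by
  have tdist_nonneg : ∀ a b : Fin 3 → ℝ, 0 ≤ torusDist a b := fun a b =>
    Real.iInf_nonneg fun m => enorm3_nonneg _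
  have tdist_le : ∀ (a b : Fin 3 → ℝ) (m : Fin 3 → ℤ),
      torusDist a b ≤ enorm3 (fun i => a i - b i + 2 * π * (m i : ℝ)) := fun a b m =>
    ciInf_le (bdd_range _ fun m' => enorm3_nonneg _) m
  apply le_antisymm
  · apply le_ciInf
    intro m
    obtain ⟨t, s, hts⟩ := aux_min θ₁ θ₂ hcross (fun i => x₁ i - x₂ i + 2 * π * (m i : ℝ))
    calc (⨅ p : ℝ × ℝ, torusDist (x₁ + p.1 • θ₁) (x₂ + p.2 • θ₂))
        ≤ torusDist (x₁ + (t, s).1 • θ₁) (x₂ + (t, s).2 • θ₂) :=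
          ciInf_le (bdd_range _ fun p => tdist_nonneg _ _) (t, s)
      _ ≤ enorm3 (fun i => (x₁ + (t, s).1 • θ₁) i - (x₂ + (t, s).2 • θ₂) i
            + 2 * π * (m i : ℝ)) := tdist_le _ _ m
      _ = enorm3 (fun i => (x₁ i - x₂ i + 2 * π * (m i : ℝ)) + t * θ₁ i - s * θ₂ i) := by
          congr 1; funext i
          simp [Pi.add_apply, Pi.smul_apply, smul_eq_mul]; ring
      _ = |∑ i, (x₁ i - x₂ i + 2 * π * (m i : ℝ)) *
            ((enorm3 (crossProduct θ₁ θ₂))⁻¹ * crossProduct θ₁ θ₂ i)| := hts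
  · apply le_ciInf
    intro p
    rw [torusDist]
    apply le_ciInf
    intro m
    calc (⨅ m : Fin 3 → ℤ, |∑ i, (x₁ i - x₂ i + 2 * π * (m i : ℝ)) *
            ((enorm3 (crossProduct θ₁ θ₂))⁻¹ * crossProduct θ₁ θ₂ i)|)
        ≤ |∑ i, (x₁ i - x₂ i + 2 * π * (m i : ℝ)) *
            ((enorm3 (crossProduct θ₁ θ₂))⁻¹ * crossProduct θ₁ θ₂ i)| :=
          ciInf_le (bdd_range _ fun m' => abs_nonneg _) m
      _ ≤ enorm3 (fun i => (x₁ i - x₂ i + 2 * π * (m i : ℝ)) + p.1 * θ₁ i - p.2 * θ₂ i) :=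
          aux_lb θ₁ θ₂ hcross _ p.1 p.2
      _ = enorm3 (fun i => (x₁ + p.1 • θ₁) i - (x₂ + p.2 • θ₂) i + 2 * π * (m i : ℝ)) := by
          congr 1; funext i
          simp [Pi.add_apply, Pi.smul_apply, smul_eq_mul]; ring
end

section
/- For the periodic lines L_j = x_j + ℝθ_j mod 2πℤ³ with directions θ₁=(4/5,0,3/5), θ₃=(0,4/5,3/5) and base points x₁=(21/100, 26/25, 47/50), x₃=(7/5, 126/25, 91/100), the torus distance between L₁ and L₃ equals (1569 − 400π)/(100√34), and this value exceeds 201/100 · (1/15). -/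
open Real

/-- Direction of the first Mikado line. -/
noncomputable def θ₁ : Fin 3 → ℝ := ![4/5, 0, 3/5]
/-- Direction of the third Mikado line. -/
noncomputable def θ₃ : Fin 3 → ℝ := ![0, 4/5, 3/5]
/-- Base point of the first Mikado line. -/
noncomputable def x₁ : Fin 3 → ℝ := ![21/100, 26/25, 47/50]
/-- Base point of the third Mikado line. -/
noncomputable def x₃ : Fin 3 → ℝ := ![7/5, 126/25, 91/100]

/-- Cauchy–Schwarz against the normal vector `(-3,-3,4)`. -/
lemma key_cs (a b c : ℝ) :
    |(-3) * a + (-3) * b + 4 * c| / Real.sqrt 34 ≤ Real.sqrt (a ^ 2 + b ^ 2 + c ^ 2) := by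
  have h34 : (0:ℝ) < Real.sqrt 34 := Real.sqrt_pos.mpr (by norm_num)
  rw [div_le_iff₀ h34]
  have h1 : |(-3) * a + (-3) * b + 4 * c| = Real.sqrt (((-3) * a + (-3) * b + 4 * c) ^ 2) :=
    (Real.sqrt_sq_eq_abs _).symm
  rw [h1, ← Real.sqrt_mul (by positivity) (34:ℝ)]
  apply Real.sqrt_le_sqrt
  nlinarith [sq_nonneg (4*b + 3*c), sq_nonneg (3*c + 4*a), sq_nonneg (a - b)]

/-- The minimal absolute value of `1569/100 + 2πk` over integers `k`. -/
lemma key_int (k : ℤ) : 1569/100 - 4 * π ≤ |1569/100 + 2 * π * (k : ℝ)| := by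
  have hπ1 : π < 3.15 := Real.pi_lt_d2
  have hπ2 : (3.141592:ℝ) < π := Real.pi_gt_d6
  rcases le_or_gt (-2 : ℤ) k with hk | hk
  · have hk' : (-2 : ℝ) ≤ (k : ℝ) := by exact_mod_cast hk
    have : 1569/100 - 4 * π ≤ 1569/100 + 2 * π * (k : ℝ) := by nlinarith [Real.pi_pos]
    exact this.trans (le_abs_self _)
  · have hk3 : k ≤ -3 := by omega
    have hk' : (k : ℝ) ≤ -3 := by exact_mod_cast hk3
    have : 1569/100 - 4 * π ≤ -(1569/100 + 2 * π * (k : ℝ)) := by nlinarith [Real.pi_pos]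
    exact this.trans (neg_le_abs _)

/-- The torus distance between the periodic lines `L₁ = x₁ + ℝθ₁` and
`L₃ = x₃ + ℝθ₃` equals `(1569 − 400π)/(100√34)`, which exceeds `(201/100)·(1/15)`. -/
theorem stmt19 :
    (⨅ p : ℝ × ℝ, torusDist (x₁ + p.1 • θ₁) (x₃ + p.2 • θ₃))
        = (1569 - 400 * π) / (100 * Real.sqrt 34)
    ∧ 201 / 100 * (1 / 15) < (1569 - 400 * π) / (100 * Real.sqrt 34) := by
  have hπ1 : π < 3.15 := Real.pi_lt_d2
  have hπ2 : (3.141592:ℝ) < π := Real.pi_gt_d6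
  have h34 : (0:ℝ) < Real.sqrt 34 := Real.sqrt_pos.mpr (by norm_num)
  have h34lt : Real.sqrt 34 < 6 := by
    have : (34:ℝ) < 6 ^ 2 := by norm_num
    exact (Real.sqrt_lt' (by norm_num)).mpr this
  set C : ℝ := (1569 - 400 * π) / (100 * Real.sqrt 34) with hC
  -- lower bound: every point-to-point torus distance is at least C
  have hlow : ∀ p : ℝ × ℝ, C ≤ torusDist (x₁ + p.1 • θ₁) (x₃ + p.2 • θ₃) := by
    intro p
    unfold torusDist
    apply le_ciInf
    intro m
    set a : ℝ := x₁ 0 + p.1 * θ₁ 0 - (x₃ 0 + p.2 * θ₃ 0) + 2 * π * (m 0 : ℝ) with ha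
    set b : ℝ := x₁ 1 + p.1 * θ₁ 1 - (x₃ 1 + p.2 * θ₃ 1) + 2 * π * (m 1 : ℝ) with hb
    set c : ℝ := x₁ 2 + p.1 * θ₁ 2 - (x₃ 2 + p.2 * θ₃ 2) + 2 * π * (m 2 : ℝ) with hc
    have hnorm : enorm3 (fun i => (x₁ + p.1 • θ₁) i - (x₃ + p.2 • θ₃) i + 2 * π * (m i : ℝ))
        = Real.sqrt (a ^ 2 + b ^ 2 + c ^ 2) := by
      unfold enorm3
      rw [Fin.sum_univ_three]
      simp [ha, hb, hc, Pi.add_apply, Pi.smul_apply, smul_eq_mul]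
    rw [hnorm]
    refine le_trans ?_ (key_cs a b c)
    have hdot : (-3) * a + (-3) * b + 4 * c
        = 1569/100 + 2 * π * ((-3 * m 0 - 3 * m 1 + 4 * m 2 : ℤ) : ℝ) := by
      rw [ha, hb, hc]
      simp only [θ₁, θ₃, x₁, x₃, Matrix.cons_val_zero, Matrix.cons_val_one, Matrix.head_cons,
        Matrix.cons_val_two, Matrix.tail_cons]
      push_cast
      ring
    rw [hdot]
    have hkey := key_int (-3 * m 0 - 3 * m 1 + 4 * m 2)
    have : C = (1569/100 - 4 * π) / Real.sqrt 34 := by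
      rw [hC]; field_simp; ring
    rw [this]
    exact div_le_div_of_nonneg_right hkey h34.le
  -- the witness parameters
  set s : ℝ := (1569 - 400 * π) / 3400 with hs
  have hs' : (0:ℝ) < 1569 - 400 * π := by nlinarith
  have hspos : 0 < s := by rw [hs]; exact div_pos hs' (by norm_num)
  set q₁ : ℝ := (5/4) * (119/100 - 4 * π - 3 * s) with hq₁
  set q₂ : ℝ := (5/4) * (3 * s - 4) with hq₂
  have hwit : torusDist (x₁ + q₁ • θ₁) (x₃ + q₂ • θ₃) ≤ C := by
    unfold torusDist
    have hbdd : BddBelow (Set.range fun m : Fin 3 → ℤ =>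
        enorm3 (fun i => (x₁ + q₁ • θ₁) i - (x₃ + q₂ • θ₃) i + 2 * π * (m i : ℝ))) := by
      refine ⟨0, ?_⟩
      rintro _ ⟨m, rfl⟩
      exact Real.sqrt_nonneg _
    refine le_trans (ciInf_le hbdd (![2, 0, 1] : Fin 3 → ℤ)) ?_
    have hval : enorm3 (fun i => (x₁ + q₁ • θ₁) i - (x₃ + q₂ • θ₃) i
        + 2 * π * ((![2, 0, 1] : Fin 3 → ℤ) i : ℝ)) = Real.sqrt (34 * s ^ 2) := by
      unfold enorm3
      rw [Fin.sum_univ_three]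
      have e0 : (x₁ + q₁ • θ₁) 0 - (x₃ + q₂ • θ₃) 0 + 2 * π * ((2:ℤ) : ℝ) = -3 * s := by
        simp only [Pi.add_apply, Pi.smul_apply, smul_eq_mul, θ₁, θ₃, x₁, x₃,
          Matrix.cons_val_zero]
        rw [hq₁, hs]; push_cast; ring
      have e1 : (x₁ + q₁ • θ₁) 1 - (x₃ + q₂ • θ₃) 1 + 2 * π * ((0:ℤ) : ℝ) = -3 * s := by
        simp only [Pi.add_apply, Pi.smul_apply, smul_eq_mul, θ₁, θ₃, x₁, x₃,
          Matrix.cons_val_one, Matrix.head_cons]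
        rw [hq₂, hs]; push_cast; ring
      have e2 : (x₁ + q₁ • θ₁) 2 - (x₃ + q₂ • θ₃) 2 + 2 * π * ((1:ℤ) : ℝ) = 4 * s := by
        simp only [Pi.add_apply, Pi.smul_apply, smul_eq_mul, θ₁, θ₃, x₁, x₃,
          Matrix.cons_val_two, Matrix.tail_cons, Matrix.head_cons]
        rw [hq₁, hq₂, hs]; push_cast; ring
      simp only [Matrix.cons_val_zero, Matrix.cons_val_one, Matrix.head_cons,
        Matrix.cons_val_two, Matrix.tail_cons]
      rw [e0, e1, e2]
      congr 1
      ring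
    rw [hval]
    have : Real.sqrt (34 * s ^ 2) = Real.sqrt 34 * s := by
      rw [Real.sqrt_mul (by norm_num), Real.sqrt_sq hspos.le]
    rw [this, hC, hs]
    have h34sq : Real.sqrt 34 * Real.sqrt 34 = 34 := Real.mul_self_sqrt (by norm_num)
    have key : Real.sqrt 34 * ((1569 - 400 * π) / 3400)
        = (1569 - 400 * π) / (100 * Real.sqrt 34) := by
      field_simp
      nlinarith [h34sq]
    exact le_of_eq key
  constructor
  · apply le_antisymm
    · have hbdd : BddBelow (Set.range fun p : ℝ × ℝ =>
          torusDist (x₁ + p.1 • θ₁) (x₃ + p.2 • θ₃)) := by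
        refine ⟨C, ?_⟩
        rintro _ ⟨p, rfl⟩
        exact hlow p
      exact (ciInf_le hbdd (q₁, q₂)).trans hwit
    · exact le_ciInf hlow
  · rw [hC, lt_div_iff₀ (by positivity)]
    nlinarith
end
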